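/- Suppose τ ∈ Aut_ℂ(K) satisfies τ(x) = x⁻¹ and τ(y) = y/x². Then τ ∘ τ = id, and τ is conjugate in Aut_ℂ(K) to a projective involution: there exist σ ∈ Aut_ℂ(K), an invertible 3×3 complex matrix (a_{ij})_{0≤i,j≤2}, and g ∈ Aut_ℂ(K) with g ∘ g = id, g(x) = (a₁₀ + a₁₁x + a₁₂y)/(a₀₀ + a₀₁x + a₀₂y) and g(y) = (a₂₀ + a₂₁x + a₂₂y)/(a₀₀ + a₀₁x + a₀₂y), such that σ ∘ τ ∘ σ⁻¹ = g. -/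

import Mathlib

/-- The field `K = ℂ(x, y)` of rational functions in two variables over `ℂ`, realized as the
fraction field of the polynomial ring `ℂ[x, y]`. Its group of `ℂ`-algebra automorphisms
`K ≃ₐ[ℂ] K` is the plane Cremona group `Cr(2)`. -/
noncomputable abbrev PlaneFunctionField : Type :=
  FractionRing (MvPolynomial (Fin 2) ℂ)

/-- The element `x` of `K = ℂ(x, y)`. -/
noncomputable def Xf : PlaneFunctionField :=
  algebraMap (MvPolynomial (Fin 2) ℂ) PlaneFunctionField (MvPolynomial.X 0)

/-- The element `y` of `K = ℂ(x, y)`. -/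
noncomputable def Yf : PlaneFunctionField :=
  algebraMap (MvPolynomial (Fin 2) ℂ) PlaneFunctionField (MvPolynomial.X 1)

/-- The image of a complex constant in `K = ℂ(x, y)`. -/
noncomputable def Cf (c : ℂ) : PlaneFunctionField :=
  algebraMap ℂ PlaneFunctionField c

/-!
Conjugating `τ` by the de Jonquières map `σ : (x, y) ↦ (x, (1 + x) y)` gives
`σ τ σ⁻¹ : (x, y) ↦ (1/x, y/x)`, a projective involution. The map `σ` is an automorphism of
`ℂ(x, y)` because `x` and `(1 + x) y` are again algebraically independent and `y` is recovered
as `((1 + x) y) / (1 + x)`.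
-/

open MvPolynomial
open scoped nonZeroDivisors

section Transcendence
variable {R A : Type*} [CommRing R] [CommRing A] [Algebra R A]

theorem Transcendental.algebraMap_mul {b : A} (hb : Transcendental R b) {c : R} (hc : c ∈ R⁰) :
    Transcendental R (algebraMap R A c * b) := by
  nontriviality R
  have hc0 : c ≠ 0 := nonZeroDivisors.ne_zero hc
  have h := hb.aeval (Polynomial.C c * Polynomial.X) (by simp [hc0]) (by simpa using hc)
  rwa [map_mul, Polynomial.aeval_C, Polynomial.aeval_X] at h

theorem Transcendental.ne_algebraMap [Nontrivial R] {a : A} (ha : Transcendental R a) (r : R) :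
    a ≠ algebraMap R A r :=
  fun h => ha (h ▸ isAlgebraic_algebraMap r)

theorem algebraicIndependent_pair_iff {a b : A} :
    AlgebraicIndependent R ![a, b] ↔
      Transcendental R a ∧ Transcendental (Algebra.adjoin R {a}) b := by
  rw [← algebraicIndependent_equiv' (finSuccEquiv' (1 : Fin 2)).symm
    (g := fun o : Option (Fin 1) => o.elim b ![a]) (by ext (_ | i) <;> [rfl; (fin_cases i; rfl)]),
    AlgebraicIndependent.option_iff, algebraicIndependent_iff_transcendental,
    Matrix.range_cons, Matrix.range_empty, Set.union_empty]

theorem AlgebraicIndependent.pair_mul_left [IsDomain A] {a b c : A}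
    (h : AlgebraicIndependent R ![a, b]) (hc : c ∈ Algebra.adjoin R {a}) (hc0 : c ≠ 0) :
    AlgebraicIndependent R ![a, c * b] := by
  obtain ⟨ha, hb⟩ := algebraicIndependent_pair_iff.mp h
  refine algebraicIndependent_pair_iff.mpr ⟨ha, ?_⟩
  exact hb.algebraMap_mul (c := ⟨c, hc⟩)
    (mem_nonZeroDivisors_of_ne_zero fun h0 => hc0 (congrArg Subtype.val h0))

end Transcendence

namespace IsFractionRing

variable {ι k K L : Type*} [CommRing k] [Field K] [Field L] [Algebra k K] [Algebra k L]
  [Algebra (MvPolynomial ι k) K] [IsFractionRing (MvPolynomial ι k) K]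
  [IsScalarTower k (MvPolynomial ι k) K]

theorem mvPolynomial_algHom_ext {f g : K →ₐ[k] L}
    (h : ∀ i, f (algebraMap (MvPolynomial ι k) K (X i)) =
      g (algebraMap (MvPolynomial ι k) K (X i))) : f = g :=
  IsLocalization.algHom_ext (MvPolynomial ι k)⁰ (MvPolynomial.algHom_ext h)

noncomputable def substAlgHom {v : ι → L} (hv : AlgebraicIndependent k v) : K →ₐ[k] L :=
  liftAlgHom (algebraicIndependent_iff_injective_aeval.mp hv)

@[simp]
theorem substAlgHom_algebraMap_X {v : ι → L} (hv : AlgebraicIndependent k v) (i : ι) :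
    substAlgHom (K := K) hv (algebraMap (MvPolynomial ι k) K (X i)) = v i := by
  rw [substAlgHom, liftAlgHom_apply, lift_algebraMap]
  exact aeval_X v i

theorem surjective_of_algebraMap_X_mem_range (f : L →ₐ[k] K)
    (h : ∀ i, algebraMap (MvPolynomial ι k) K (X i) ∈ f.range) : Function.Surjective f := by
  have hmem : ∀ p, algebraMap (MvPolynomial ι k) K p ∈ f.range := by
    intro p
    induction p using MvPolynomial.induction_on with
    | C c =>
      exact IsScalarTower.algebraMap_apply k (MvPolynomial ι k) K c ▸ f.range.algebraMap_mem c
    | add p q hp hq => simpa using add_mem hp hq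
    | mul_X p i hp => simpa using mul_mem hp (h i)
  intro z
  obtain ⟨p, q, -, rfl⟩ := div_surjective (MvPolynomial ι k) z
  obtain ⟨u, hu⟩ : ∃ u, f u = algebraMap _ K p := hmem p
  obtain ⟨w, hw⟩ : ∃ w, f w = algebraMap _ K q := hmem q
  exact ⟨u / w, by rw [map_div₀, hu, hw]⟩

end IsFractionRing

namespace PlaneFunctionField

theorem algebraicIndependent_Xf_Yf : AlgebraicIndependent ℂ ![Xf, Yf] := by
  convert (algebraicIndependent_X (Fin 2) ℂ).map'
    (f := IsScalarTower.toAlgHom ℂ _ PlaneFunctionField) (IsFractionRing.injective _ _) using 1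
  ext i
  fin_cases i <;> rfl

theorem transcendental_Xf : Transcendental ℂ Xf :=
  (algebraicIndependent_pair_iff.mp algebraicIndependent_Xf_Yf).1

theorem Xf_ne_zero : Xf ≠ 0 := by
  simpa using transcendental_Xf.ne_algebraMap 0

theorem one_add_Xf_ne_zero : 1 + Xf ≠ 0 := by
  intro h
  exact transcendental_Xf.ne_algebraMap (-1) (by simp [eq_neg_of_add_eq_zero_right h])

theorem algEquiv_ext {f g : PlaneFunctionField ≃ₐ[ℂ] PlaneFunctionField}
    (hx : f Xf = g Xf) (hy : f Yf = g Yf) : f = g :=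
  AlgEquiv.coe_toAlgHom_injective <|
    IsFractionRing.mvPolynomial_algHom_ext (ι := Fin 2) fun i => by
      fin_cases i
      exacts [hx, hy]

noncomputable def yScalingHom : PlaneFunctionField →ₐ[ℂ] PlaneFunctionField :=
  IsFractionRing.substAlgHom <| algebraicIndependent_Xf_Yf.pair_mul_left
    (add_mem (one_mem _) (Algebra.self_mem_adjoin_singleton ℂ Xf)) one_add_Xf_ne_zero

theorem yScalingHom_Xf : yScalingHom Xf = Xf :=
  IsFractionRing.substAlgHom_algebraMap_X _ 0

theorem yScalingHom_Yf : yScalingHom Yf = (1 + Xf) * Yf :=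
  IsFractionRing.substAlgHom_algebraMap_X _ 1

theorem yScalingHom_Yf_div : yScalingHom (Yf / (1 + Xf)) = Yf := by
  rw [map_div₀, yScalingHom_Yf, map_add, map_one, yScalingHom_Xf,
    mul_div_cancel_left₀ Yf one_add_Xf_ne_zero]

noncomputable def yScaling : PlaneFunctionField ≃ₐ[ℂ] PlaneFunctionField :=
  AlgEquiv.ofBijective yScalingHom ⟨yScalingHom.toRingHom.injective,
    IsFractionRing.surjective_of_algebraMap_X_mem_range (ι := Fin 2) _ fun i => by
      fin_cases i
      exacts [⟨Xf, yScalingHom_Xf⟩, ⟨_, yScalingHom_Yf_div⟩]⟩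

theorem yScaling_Xf : yScaling Xf = Xf := yScalingHom_Xf

theorem yScaling_Yf : yScaling Yf = (1 + Xf) * Yf := yScalingHom_Yf

theorem yScaling_Yf_div : yScaling (Yf / (1 + Xf)) = Yf := yScalingHom_Yf_div

theorem yScaling_symm_Xf : yScaling.symm Xf = Xf :=
  yScaling.symm_apply_eq.mpr yScaling_Xf.symm

theorem yScaling_symm_Yf : yScaling.symm Yf = Yf / (1 + Xf) :=
  yScaling.symm_apply_eq.mpr yScaling_Yf_div.symm

end PlaneFunctionField

open PlaneFunctionField

/-- The quadratic transformation `τ₂ : (x, y) ↦ (x⁻¹, y/x²)` is an involution and is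
conjugate in the Cremona group to a projective (linear fractional) involution
`g : (x, y) ↦ ((a₁₀ + a₁₁x + a₁₂y)/(a₀₀ + a₀₁x + a₀₂y), (a₂₀ + a₂₁x + a₂₂y)/(a₀₀ + a₀₁x + a₀₂y))`
given by an invertible 3×3 complex matrix. -/
theorem tau2_conjugate_projective_involution
    (τ : PlaneFunctionField ≃ₐ[ℂ] PlaneFunctionField)
    (hτx : τ Xf = Xf⁻¹) (hτy : τ Yf = Yf / Xf ^ 2) :
    τ * τ = 1 ∧
    ∃ (σ g : PlaneFunctionField ≃ₐ[ℂ] PlaneFunctionField)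
      (a : Matrix (Fin 3) (Fin 3) ℂ), IsUnit a ∧ g * g = 1 ∧
        g Xf = (Cf (a 1 0) + Cf (a 1 1) * Xf + Cf (a 1 2) * Yf) /
          (Cf (a 0 0) + Cf (a 0 1) * Xf + Cf (a 0 2) * Yf) ∧
        g Yf = (Cf (a 2 0) + Cf (a 2 1) * Xf + Cf (a 2 2) * Yf) /
          (Cf (a 0 0) + Cf (a 0 1) * Xf + Cf (a 0 2) * Yf) ∧
        σ * τ * σ⁻¹ = g := by
  have hX := Xf_ne_zero
  have hX1 := one_add_Xf_ne_zero
  have hττ : τ * τ = 1 := algEquiv_ext (by simp [hτx]) (by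
    simp only [AlgEquiv.mul_apply, hτy, map_div₀, map_pow, hτx, inv_pow, div_inv_eq_mul,
      AlgEquiv.one_apply]
    field_simp)
  have hgx : (yScaling * τ * yScaling⁻¹) Xf = Xf⁻¹ := by
    simp [AlgEquiv.aut_inv, yScaling_symm_Xf, hτx, yScaling_Xf]
  have hgy : (yScaling * τ * yScaling⁻¹) Yf = Yf / Xf := by
    simp only [AlgEquiv.aut_inv, AlgEquiv.mul_apply, yScaling_symm_Yf, map_div₀, hτy,
      yScaling_Yf, map_pow, yScaling_Xf, map_add, map_one, hτx, map_inv₀]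
    field_simp
    rw [add_comm Xf, mul_div_cancel_left₀ Yf hX1]
  refine ⟨hττ, yScaling, _, !![0, 1, 0; 1, 0, 0; 0, 0, 1], ?_, ?_, ?_, ?_, rfl⟩
  · simp [Matrix.isUnit_iff_isUnit_det, Matrix.det_fin_three]
  · simp [mul_assoc, ← mul_assoc τ τ, hττ]
  · simp [hgx, Cf]
  · simp [hgy, Cf]
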